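/- Let S be a monoid with zero, λ a nonempty set, and H₁ the group of units of S. The map 𝔉 sending a triple [φ, h, u] ∈ 𝒮_λ × Aut(S) × H₁^λ to the automorphism σ_{[φ,h,u]} of B⁰_λ(S) given by (α, s, β) ↦ (φ(α), u(α)·h(s)·(u(β))⁻¹, φ(β)), 0 ↦ 0, is a surjective group homomorphism from the group (𝒮_λ × Aut(S) × H₁^λ, ·), with operation [φ, h, u]·[φ', h', u'] = [φφ', hh', α ↦ u'(φ(α))·h'(u(α))], onto the automorphism group Aut(B⁰_λ(S)). -/

import Mathlib

/-!
An automorphism `e` of `B⁰_Λ(S)` fixes `0`, so it sends the idempotent `(α, 1, α)` to a nonzero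
idempotent, which must have the form `(φ α, t, φ α)`. Since
`(α, 1, α)(α, s, β)(β, 1, β) = (α, s, β)`, the image of `(α, s, β)` is `(φ α, _, φ β)`; applying
the same to `e⁻¹` shows that `φ` is a bijection and that `t = 1`. Fixing `α₀` and factoring
`(α, s, β) = (α, 1, α₀)(α₀, s, α₀)(α₀, 1, β)`, the middle entries of the images of the three
factors are `u α`, `h s` and `(u β)⁻¹`, where `h` is an automorphism of `S` and `u α` a unit.
-/

/-- The Brandt λ⁰-extension `B⁰_Λ(S)` of a semigroup `S` with zero: its underlying
set is `(Λ × (S \ {0_S}) × Λ) ∪ {0}`, where `none` plays the role of the zero `0`. -/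
def Brandt (Λ S : Type*) [Zero S] : Type _ :=
  Option (Λ × {s : S // s ≠ 0} × Λ)

namespace Brandt

variable {Λ S : Type*}

instance [Zero S] : Zero (Brandt Λ S) := ⟨none⟩

open Classical in
/-- `(α, a, β)·(γ, b, δ) = (α, ab, δ)` if `β = γ` and `ab ≠ 0_S`, and `0` otherwise;
`0` is a two-sided zero. -/
noncomputable instance [Zero S] [Mul S] : Mul (Brandt Λ S) :=
  ⟨fun x y =>
    match x, y with
    | some (α, a, β), some (γ, b, δ) =>
        if h : β = γ ∧ a.1 * b.1 ≠ 0 then some (α, ⟨a.1 * b.1, h.2⟩, δ) else 0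
    | _, _ => 0⟩

open Classical in
/-- `Brandt.mk α s β` is the element `(α, s, β)` of `B⁰_Λ(S)` if `s ≠ 0`, and `0` otherwise. -/
noncomputable def mk [Zero S] (α : Λ) (s : S) (β : Λ) : Brandt Λ S :=
  if h : s ≠ 0 then some (α, ⟨s, h⟩, β) else 0

end Brandt

/-- An automorphism of a semigroup: a bijective map preserving the multiplication. -/
def IsSemigroupAut {T : Type*} [Mul T] (σ : T → T) : Prop :=
  Function.Bijective σ ∧ ∀ x y : T, σ (x * y) = σ x * σ y

/-- `brandtAut φ h u` is the automorphism `σ_{[φ,h,u]}` of `B⁰_Λ(S)` given by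
`(α, s, β) ↦ (φ(α), u(α)·h(s)·(u(β))⁻¹, φ(β))` and `0 ↦ 0`. -/
noncomputable def brandtAut {Λ S : Type*} [MonoidWithZero S]
    (φ : Λ ≃ Λ) (h : S ≃* S) (u : Λ → Sˣ) :
    Brandt Λ S → Brandt Λ S
  | some (α, s, β) => Brandt.mk (φ α) ((u α : S) * h s.1 * ((u β)⁻¹ : Sˣ)) (φ β)
  | none => 0

/-- Multiplication on `𝒮_Λ × Aut(S) × H₁^Λ`:
`[φ, h, u]·[φ', h', u'] = [φφ', hh', α ↦ u'(φ(α))·h'(u(α))]`, where `φφ'` is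
`α ↦ φ'(φ(α))` and `hh'` is `s ↦ h'(h(s))` (left-to-right composition). -/
def tripleMul {Λ S : Type*} [Monoid S]
    (p q : (Λ ≃ Λ) × (S ≃* S) × (Λ → Sˣ)) : (Λ ≃ Λ) × (S ≃* S) × (Λ → Sˣ) :=
  ⟨p.1.trans q.1, p.2.1.trans q.2.1,
    fun α => q.2.2 (p.1 α) * Units.map q.2.1.toMonoidHom (p.2.2 α)⟩

namespace Brandt

variable {Λ S : Type*}

noncomputable instance [Zero S] [Mul S] : MulZeroClass (Brandt Λ S) where
  zero_mul x := by rcases x with _ | _ <;> rfl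
  mul_zero x := by rcases x with _ | _ <;> rfl

section Zero

variable [Zero S]

theorem mk_of_ne_zero {s : S} (hs : s ≠ 0) (α β : Λ) : mk α s β = some (α, ⟨s, hs⟩, β) :=
  dif_pos hs

theorem some_eq_mk (α β : Λ) (s : {s : S // s ≠ 0}) :
    (some (α, s, β) : Brandt Λ S) = mk α s.1 β :=
  (mk_of_ne_zero s.2 α β).symm

@[simp]
theorem mk_zero (α β : Λ) : mk α (0 : S) β = 0 :=
  dif_neg (not_not.mpr rfl)

@[simp]
theorem mk_eq_zero {α β : Λ} {s : S} : mk α s β = 0 ↔ s = 0 := by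
  refine ⟨fun h => ?_, fun h => h ▸ mk_zero α β⟩
  by_contra hs
  rw [mk_of_ne_zero hs] at h
  exact Option.some_ne_none _ h

theorem mk_ne_zero {s : S} (hs : s ≠ 0) (α β : Λ) : mk α s β ≠ 0 :=
  mk_eq_zero.not.mpr hs

theorem mk_eq_mk_iff {α β γ δ : Λ} {s t : S} (ht : t ≠ 0) :
    mk α s β = mk γ t δ ↔ α = γ ∧ s = t ∧ β = δ := by
  refine ⟨fun h => ?_, fun ⟨hαγ, hst, hβδ⟩ => hαγ ▸ hst ▸ hβδ ▸ rfl⟩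
  have hs : s ≠ 0 := fun hs => ht (mk_eq_zero.mp (h ▸ mk_eq_zero.mpr hs))
  rw [mk_of_ne_zero hs, mk_of_ne_zero ht] at h
  have h' := Option.some_injective _ h
  simp only [Prod.mk.injEq, Subtype.mk.injEq] at h'
  exact h'

def entry : Brandt Λ S → S
  | some (_, s, _) => s
  | none => 0

@[simp]
theorem entry_zero : entry (0 : Brandt Λ S) = 0 :=
  rfl

@[simp]
theorem entry_mk (α β : Λ) (s : S) : entry (mk α s β) = s := by
  by_cases hs : s = 0
  · rw [hs, mk_zero]; rfl
  · rw [mk_of_ne_zero hs]; rfl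

theorem exists_eq_mk_entry {x : Brandt Λ S} (hx : x ≠ 0) : ∃ α β, x = mk α (entry x) β := by
  rcases x with _ | ⟨α, s, β⟩
  · exact absurd rfl hx
  · exact ⟨α, β, by rw [some_eq_mk, entry_mk]⟩

theorem nonempty_and_nontrivial [Nontrivial (Brandt Λ S)] : Nonempty Λ ∧ Nontrivial S := by
  obtain ⟨x, hx⟩ := exists_ne (0 : Brandt Λ S)
  rcases x with _ | ⟨α, s, -⟩
  · exact absurd rfl hx
  · exact ⟨⟨α⟩, nontrivial_of_ne _ _ s.2⟩

theorem mk_mul_mk_of_ne [Mul S] {β γ : Λ} (hβγ : β ≠ γ) (α δ : Λ) (a b : S) :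
    mk α a β * mk γ b δ = 0 := by
  by_cases ha : a = 0
  · rw [ha, mk_zero, zero_mul]
  by_cases hb : b = 0
  · rw [hb, mk_zero, mul_zero]
  rw [mk_of_ne_zero ha, mk_of_ne_zero hb]
  exact dif_neg (by simp [hβγ])

theorem eq_of_mk_mul_mk_ne_zero [Mul S] {α β γ δ : Λ} {a b : S}
    (h : mk α a β * mk γ b δ ≠ 0) : β = γ := by
  by_contra hβγ
  exact h (mk_mul_mk_of_ne hβγ α δ a b)

end Zero

theorem mk_mul_mk [MulZeroClass S] (α β γ : Λ) (a b : S) :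
    mk α a β * mk β b γ = mk α (a * b) γ := by
  by_cases ha : a = 0
  · rw [ha, mk_zero, zero_mul, zero_mul, mk_zero]
  by_cases hb : b = 0
  · rw [hb, mk_zero, mul_zero, mul_zero, mk_zero]
  rw [mk_of_ne_zero ha, mk_of_ne_zero hb]
  by_cases hab : a * b = 0
  · rw [hab, mk_zero]; exact dif_neg (by simp [hab])
  · rw [mk_of_ne_zero hab]; exact dif_pos ⟨rfl, hab⟩

end Brandt

open Brandt

section BrandtAut

variable {Λ S : Type*} [MonoidWithZero S]

theorem brandtAut_zero (φ : Λ ≃ Λ) (h : S ≃* S) (u : Λ → Sˣ) :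
    brandtAut φ h u (0 : Brandt Λ S) = 0 :=
  rfl

theorem brandtAut_mk (φ : Λ ≃ Λ) (h : S ≃* S) (u : Λ → Sˣ) (α β : Λ) (s : S) :
    brandtAut φ h u (mk α s β) = mk (φ α) (u α * h s * ↑(u β)⁻¹) (φ β) := by
  by_cases hs : s = 0
  · rw [hs, mk_zero, map_zero, mul_zero, zero_mul, mk_zero]; rfl
  · rw [mk_of_ne_zero hs]; rfl

theorem brandtAut_mul (φ : Λ ≃ Λ) (h : S ≃* S) (u : Λ → Sˣ) (x y : Brandt Λ S) :
    brandtAut φ h u (x * y) = brandtAut φ h u x * brandtAut φ h u y := by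
  rcases x with _ | ⟨α, a, β⟩
  · rfl
  rw [some_eq_mk]
  rcases y with _ | ⟨γ, b, δ⟩
  · change brandtAut φ h u (_ * 0) = _ * brandtAut φ h u 0
    rw [mul_zero, brandtAut_zero, mul_zero]
  rw [some_eq_mk, brandtAut_mk, brandtAut_mk]
  by_cases hβγ : β = γ
  · subst hβγ
    rw [mk_mul_mk, brandtAut_mk, mk_mul_mk]
    simp [mul_assoc]
  · rw [mk_mul_mk_of_ne hβγ, mk_mul_mk_of_ne (φ.injective.ne hβγ), brandtAut_zero]

theorem brandtAut_tripleMul (p q : (Λ ≃ Λ) × (S ≃* S) × (Λ → Sˣ)) :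
    brandtAut (tripleMul p q).1 (tripleMul p q).2.1 (tripleMul p q).2.2 =
      brandtAut q.1 q.2.1 q.2.2 ∘ brandtAut p.1 p.2.1 p.2.2 := by
  funext x
  rcases x with _ | ⟨α, s, β⟩
  · rfl
  · rw [some_eq_mk, Function.comp_apply, brandtAut_mk, brandtAut_mk, brandtAut_mk]
    simp [tripleMul, mul_assoc]

theorem brandtAut_one :
    brandtAut (Equiv.refl Λ) (MulEquiv.refl S) 1 = (id : Brandt Λ S → Brandt Λ S) := by
  funext x
  rcases x with _ | ⟨α, s, β⟩
  · rfl
  · rw [some_eq_mk, brandtAut_mk]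
    simp

def tripleInv (p : (Λ ≃ Λ) × (S ≃* S) × (Λ → Sˣ)) : (Λ ≃ Λ) × (S ≃* S) × (Λ → Sˣ) :=
  ⟨p.1.symm, p.2.1.symm, fun α => (Units.map p.2.1.symm.toMonoidHom (p.2.2 (p.1.symm α)))⁻¹⟩

theorem tripleMul_tripleInv (p : (Λ ≃ Λ) × (S ≃* S) × (Λ → Sˣ)) :
    tripleMul p (tripleInv p) = ⟨Equiv.refl Λ, MulEquiv.refl S, 1⟩ := by
  obtain ⟨φ, h, u⟩ := p
  refine Prod.ext φ.self_trans_symm (Prod.ext h.self_trans_symm (funext fun α => ?_))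
  simp [tripleMul, tripleInv]

theorem tripleInv_tripleMul (p : (Λ ≃ Λ) × (S ≃* S) × (Λ → Sˣ)) :
    tripleMul (tripleInv p) p = ⟨Equiv.refl Λ, MulEquiv.refl S, 1⟩ := by
  obtain ⟨φ, h, u⟩ := p
  refine Prod.ext φ.symm_trans_self (Prod.ext h.symm_trans_self (funext fun α => ?_))
  ext
  simp [tripleMul, tripleInv]

theorem brandtAut_bijective (p : (Λ ≃ Λ) × (S ≃* S) × (Λ → Sˣ)) :
    Function.Bijective (brandtAut p.1 p.2.1 p.2.2) := by
  have hright := brandtAut_tripleMul p (tripleInv p)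
  have hleft := brandtAut_tripleMul (tripleInv p) p
  rw [tripleMul_tripleInv, brandtAut_one] at hright
  rw [tripleInv_tripleMul, brandtAut_one] at hleft
  exact Function.bijective_iff_has_inverse.mpr
    ⟨_, fun x => (congrFun hright x).symm, fun x => (congrFun hleft x).symm⟩

theorem isSemigroupAut_brandtAut (φ : Λ ≃ Λ) (h : S ≃* S) (u : Λ → Sˣ) :
    IsSemigroupAut (brandtAut φ h u) :=
  ⟨brandtAut_bijective (φ, h, u), brandtAut_mul φ h u⟩

end BrandtAut

namespace Brandt

variable {Λ S : Type*} [MonoidWithZero S]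

section Nontrivial

variable [Nontrivial S] (e : Brandt Λ S ≃* Brandt Λ S)

theorem exists_map_mk_one_self (α : Λ) :
    ∃ α', e (mk α 1 α) = mk α' (entry (e (mk α 1 α))) α' := by
  have hx : e (mk α 1 α) ≠ 0 :=
    (EmbeddingLike.map_ne_zero_iff (f := e)).mpr (mk_ne_zero one_ne_zero α α)
  obtain ⟨a, b, hab⟩ := exists_eq_mk_entry hx
  have hidem : e (mk α 1 α) * e (mk α 1 α) ≠ 0 := by rwa [← map_mul, mk_mul_mk, one_mul]
  rw [hab] at hidem
  rw [eq_of_mk_mul_mk_ne_zero hidem] at hab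
  exact ⟨a, hab⟩

noncomputable def indexMap (α : Λ) : Λ :=
  (exists_map_mk_one_self e α).choose

theorem map_mk_one_self (α : Λ) :
    e (mk α 1 α) = mk (indexMap e α) (entry (e (mk α 1 α))) (indexMap e α) :=
  (exists_map_mk_one_self e α).choose_spec

theorem map_mk (α β : Λ) (s : S) :
    e (mk α s β) = mk (indexMap e α) (entry (e (mk α s β))) (indexMap e β) := by
  by_cases hs : s = 0
  · rw [hs, mk_zero, map_zero, entry_zero, mk_zero]
  have hx : e (mk α s β) ≠ 0 := (EmbeddingLike.map_ne_zero_iff (f := e)).mpr (mk_ne_zero hs α β)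
  obtain ⟨a, b, hab⟩ := exists_eq_mk_entry hx
  have ha : e (mk α 1 α) * e (mk α s β) ≠ 0 := by rwa [← map_mul, mk_mul_mk, one_mul]
  have hb : e (mk α s β) * e (mk β 1 β) ≠ 0 := by rwa [← map_mul, mk_mul_mk, mul_one]
  rw [map_mk_one_self, hab] at ha
  rw [map_mk_one_self e β, hab] at hb
  rwa [← eq_of_mk_mul_mk_ne_zero ha, eq_of_mk_mul_mk_ne_zero hb] at hab

theorem entry_map_mk_mul (α β γ : Λ) (a b : S) :
    entry (e (mk α a β)) * entry (e (mk β b γ)) = entry (e (mk α (a * b) γ)) := by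
  conv_rhs => rw [← mk_mul_mk α β γ, map_mul, map_mk e α β, map_mk e β γ, mk_mul_mk, entry_mk]

theorem indexMap_symm_indexMap (α : Λ) : indexMap e.symm (indexMap e α) = α := by
  have h := e.symm_apply_apply (mk α 1 α)
  rw [map_mk_one_self, map_mk e.symm, mk_eq_mk_iff one_ne_zero] at h
  exact h.1

noncomputable def indexEquiv : Λ ≃ Λ where
  toFun := indexMap e
  invFun := indexMap e.symm
  left_inv := indexMap_symm_indexMap e
  right_inv α := by simpa using indexMap_symm_indexMap e.symm α

theorem symm_map_mk_indexMap (α β : Λ) (s : S) :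
    e.symm (mk (indexMap e α) s (indexMap e β)) =
      mk α (entry (e.symm (mk (indexMap e α) s (indexMap e β)))) β := by
  conv_lhs => rw [map_mk e.symm]
  rw [indexMap_symm_indexMap, indexMap_symm_indexMap]

theorem entry_map_mk_one_self (α : Λ) : entry (e (mk α 1 α)) = 1 := by
  set r := entry (e.symm (mk (indexMap e α) 1 (indexMap e α)))
  have hr : entry (e (mk α r α)) = 1 := by
    rw [← symm_map_mk_indexMap, e.apply_symm_apply, entry_mk]
  calc entry (e (mk α 1 α))
      = entry (e (mk α 1 α)) * entry (e (mk α r α)) := by rw [hr, mul_one]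
    _ = 1 := by rw [entry_map_mk_mul, one_mul, hr]

noncomputable def entryEquiv (α₀ : Λ) : S ≃* S where
  toFun s := entry (e (mk α₀ s α₀))
  invFun t := entry (e.symm (mk (indexMap e α₀) t (indexMap e α₀)))
  left_inv s := by
    dsimp only
    rw [← map_mk, e.symm_apply_apply, entry_mk]
  right_inv t := by
    dsimp only
    rw [← symm_map_mk_indexMap, e.apply_symm_apply, entry_mk]
  map_mul' s t := (entry_map_mk_mul e α₀ α₀ α₀ s t).symm

noncomputable def entryUnit (α₀ α : Λ) : Sˣ where
  val := entry (e (mk α 1 α₀))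
  inv := entry (e (mk α₀ 1 α))
  val_inv := by rw [entry_map_mk_mul, one_mul, entry_map_mk_one_self]
  inv_val := by rw [entry_map_mk_mul, one_mul, entry_map_mk_one_self]

theorem brandtAut_indexEquiv_entryEquiv_entryUnit (α₀ : Λ) :
    brandtAut (indexEquiv e) (entryEquiv e α₀) (entryUnit e α₀) = e := by
  funext x
  rcases x with _ | ⟨α, s, β⟩
  · exact (map_zero e).symm
  rw [some_eq_mk, brandtAut_mk, map_mk e α β]
  congr 1
  change entry (e (mk α 1 α₀)) * entry (e (mk α₀ s.1 α₀)) * entry (e (mk α₀ 1 β)) = _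
  rw [entry_map_mk_mul, entry_map_mk_mul, one_mul, mul_one]

end Nontrivial

theorem exists_brandtAut_eq (e : Brandt Λ S ≃* Brandt Λ S) :
    ∃ p : (Λ ≃ Λ) × (S ≃* S) × (Λ → Sˣ), brandtAut p.1 p.2.1 p.2.2 = e := by
  rcases subsingleton_or_nontrivial (Brandt Λ S) with hB | hB
  · exact ⟨(Equiv.refl Λ, MulEquiv.refl S, 1), funext fun _ => Subsingleton.elim _ _⟩
  · obtain ⟨⟨α₀⟩, hS⟩ := nonempty_and_nontrivial (Λ := Λ) (S := S)
    exact ⟨(indexEquiv e, entryEquiv e α₀, entryUnit e α₀),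
      brandtAut_indexEquiv_entryEquiv_entryUnit e α₀⟩

end Brandt

theorem stmt_9_general {Λ S : Type*} [MonoidWithZero S] :
    (∀ p : (Λ ≃ Λ) × (S ≃* S) × (Λ → Sˣ),
      IsSemigroupAut (brandtAut p.1 p.2.1 p.2.2)) ∧
    (∀ p q : (Λ ≃ Λ) × (S ≃* S) × (Λ → Sˣ),
      brandtAut (tripleMul p q).1 (tripleMul p q).2.1 (tripleMul p q).2.2 =
        brandtAut q.1 q.2.1 q.2.2 ∘ brandtAut p.1 p.2.1 p.2.2) ∧
    (∀ σ : Brandt Λ S → Brandt Λ S, IsSemigroupAut σ →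
      ∃ p : (Λ ≃ Λ) × (S ≃* S) × (Λ → Sˣ), brandtAut p.1 p.2.1 p.2.2 = σ) :=
  ⟨fun p => isSemigroupAut_brandtAut p.1 p.2.1 p.2.2, brandtAut_tripleMul,
    fun σ hσ => exists_brandtAut_eq (MulEquiv.mk' (Equiv.ofBijective σ hσ.1) hσ.2)⟩

/-- The map `𝔉` sending the triple `[φ, h, u] ∈ 𝒮_Λ × Aut(S) × H₁^Λ` to the
automorphism `σ_{[φ,h,u]}` of `B⁰_Λ(S)` is a surjective group homomorphism from the
group `(𝒮_Λ × Aut(S) × H₁^Λ, ·)` onto the automorphism group `Aut(B⁰_Λ(S))` (whose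
operation is composition applied left-to-right): every `σ_{[φ,h,u]}` is an
automorphism, `𝔉` is multiplicative, and `𝔉` is surjective onto the set of
automorphisms of `B⁰_Λ(S)`. -/
theorem stmt_9 {Λ S : Type*} [Nonempty Λ] [MonoidWithZero S] :
    (∀ p : (Λ ≃ Λ) × (S ≃* S) × (Λ → Sˣ),
      IsSemigroupAut (brandtAut p.1 p.2.1 p.2.2)) ∧
    (∀ p q : (Λ ≃ Λ) × (S ≃* S) × (Λ → Sˣ),
      brandtAut (tripleMul p q).1 (tripleMul p q).2.1 (tripleMul p q).2.2 =
        brandtAut q.1 q.2.1 q.2.2 ∘ brandtAut p.1 p.2.1 p.2.2) ∧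
    (∀ σ : Brandt Λ S → Brandt Λ S, IsSemigroupAut σ →
      ∃ p : (Λ ≃ Λ) × (S ≃* S) × (Λ → Sˣ), brandtAut p.1 p.2.1 p.2.2 = σ) :=
  stmt_9_general
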